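/- arXiv:1105.1662 — 6 statements merged into one kernel-verified Lean document; each statement's English description precedes it below -/
import Mathlib

section
/- A sequence of σ-algebras A^n (sub-σ-algebras of H on a probability space) converges weakly to a σ-algebra A (i.e., for all B in A, E(1_B | A^n) → 1_B in probability) if and only if for every integrable A-measurable random variable Z, E(Z | A^n) converges in probability to Z. -/
/-! Conditional expectation is linear, so weak convergence gives `E(g | A n) → g` in measure for
every `Alim`-simple `g`. Since `E(· | A n)` is an `L¹` contraction, and by Markov's inequality
`L¹`-closeness forces closeness in measure uniformly in `n`, this convergence passes to
`L¹`-limits; `Alim`-simple functions are `L¹`-dense among integrable `Alim`-measurable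
functions. -/

open MeasureTheory Filter

/-- Weak convergence of a sequence of sub-σ-algebras `A n` to a σ-algebra `Alim`:
for every `B ∈ Alim`, the conditional expectations `E(1_B | A n)` converge in probability
(in measure) to `1_B`. -/
def WeakConvSigma {Ω : Type*} {mΩ : MeasurableSpace Ω} (μ : Measure Ω)
    (A : ℕ → MeasurableSpace Ω) (Alim : MeasurableSpace Ω) : Prop :=
  ∀ B : Set Ω, MeasurableSet[Alim] B →
    TendstoInMeasure μ
      (fun n => μ[Set.indicator B (fun _ => (1 : ℝ)) | A n]) atTop
      (Set.indicator B (fun _ => (1 : ℝ)))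

open scoped ENNReal

namespace MeasureTheory

variable {α ι E : Type*} {m : MeasurableSpace α} {μ : Measure α} [NormedAddCommGroup E]

theorem measure_le_enorm_add_le (f g : α → E) (ε : ℝ≥0∞) :
    μ {x | ε ≤ ‖f x + g x‖ₑ} ≤ μ {x | ε / 2 ≤ ‖f x‖ₑ} + μ {x | ε / 2 ≤ ‖g x‖ₑ} := by
  refine (measure_mono fun x hx => ?_).trans (measure_union_le _ _)
  by_contra hlt
  simp only [Set.mem_union, Set.mem_ofPred_eq, not_or, not_le] at hx hlt
  have := (enorm_add_le (f x) (g x)).trans_lt (ENNReal.add_lt_add hlt.1 hlt.2)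
  rw [ENNReal.add_halves] at this
  exact this.not_ge hx

theorem TendstoInMeasure.add {l : Filter ι} {f g : ι → α → E} {F G : α → E}
    (hf : TendstoInMeasure μ f l F) (hg : TendstoInMeasure μ g l G) :
    TendstoInMeasure μ (fun i => f i + g i) l (F + G) := by
  rw [tendstoInMeasure_iff_enorm] at hf hg ⊢
  intro ε hε hε_top
  have hε2 : 0 < ε / 2 := ENNReal.half_pos hε.ne'
  have hε2_top : ε / 2 ≠ ∞ := ENNReal.div_ne_top hε_top two_ne_zero
  refine tendsto_of_tendsto_of_tendsto_of_le_of_le tendsto_const_nhds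
    (by simpa using (hf _ hε2 hε2_top).add (hg _ hε2 hε2_top)) (fun _ => zero_le) fun i => ?_
  simp only [Pi.add_apply, add_sub_add_comm]
  exact measure_le_enorm_add_le _ _ ε

theorem TendstoInMeasure.const_smul {𝕜 : Type*} [NormedField 𝕜] [NormedSpace 𝕜 E]
    {l : Filter ι} {f : ι → α → E} {F : α → E} (hf : TendstoInMeasure μ f l F) (c : 𝕜) :
    TendstoInMeasure μ (fun i => c • f i) l (c • F) := by
  rcases eq_or_ne c 0 with rfl | hc
  · simpa using tendstoInMeasure_iff_norm.2 fun ε hε => by simp [hε.not_ge, tendsto_const_nhds]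
  rw [tendstoInMeasure_iff_norm] at hf ⊢
  intro ε hε
  convert hf (ε / ‖c‖) (div_pos hε (norm_pos_iff.2 hc)) using 4 with i x
  simp only [Pi.smul_apply, ← smul_sub, norm_smul, div_le_iff₀' (norm_pos_iff.2 hc)]

theorem tendstoInMeasure_iff_tendstoInMeasure_sub {l : Filter ι} {f : ι → α → E} {g : α → E} :
    TendstoInMeasure μ f l g ↔ TendstoInMeasure μ (fun i => f i - g) l 0 := by
  simp only [tendstoInMeasure_iff_enorm, Pi.sub_apply, Pi.zero_apply, sub_zero]

theorem tendstoInMeasure_zero_of_forall_eLpNorm_sub_le {l : Filter ι} {f : ι → α → E}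
    (h : ∀ δ : ℝ≥0∞, 0 < δ → ∃ g : ι → α → E, TendstoInMeasure μ g l 0 ∧
      ∀ i, AEStronglyMeasurable (f i - g i) μ ∧ eLpNorm (f i - g i) 1 μ ≤ δ) :
    TendstoInMeasure μ f l 0 := by
  rw [tendstoInMeasure_iff_enorm]
  intro ε hε hε_top
  have hε2 : ε / 2 ≠ 0 := (ENNReal.half_pos hε.ne').ne'
  have hε2_top : ε / 2 ≠ ∞ := ENNReal.div_ne_top hε_top two_ne_zero
  refine ENNReal.tendsto_nhds_zero.2 fun η hη => ?_
  have hη2 : 0 < η / 2 := ENNReal.half_pos hη.ne'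
  obtain ⟨g, hg, hfg⟩ := h (ε / 2 * (η / 2)) (ENNReal.mul_pos hε2 hη2.ne').bot_lt
  have h_markov (i : ι) : μ {x | ε / 2 ≤ ‖(f i - g i) x‖ₑ} ≤ η / 2 :=
    calc μ {x | ε / 2 ≤ ‖(f i - g i) x‖ₑ} ≤ (ε / 2)⁻¹ * eLpNorm (f i - g i) 1 μ := by
          simpa using meas_ge_le_mul_pow_eLpNorm_enorm μ one_ne_zero ENNReal.one_ne_top
            (hfg i).1 hε2 (by simp [hε2_top])
      _ ≤ (ε / 2)⁻¹ * (ε / 2 * (η / 2)) := by gcongr; exact (hfg i).2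
      _ = η / 2 := ENNReal.inv_mul_cancel_left hε2 hε2_top
  filter_upwards [ENNReal.tendsto_nhds_zero.1
    (tendstoInMeasure_iff_enorm.1 hg _ (ENNReal.half_pos hε.ne') hε2_top) _ hη2] with i hi
  calc μ {x | ε ≤ ‖f i x - (0 : α → E) x‖ₑ}
      ≤ μ {x | ε / 2 ≤ ‖(f i - g i) x‖ₑ} + μ {x | ε / 2 ≤ ‖g i x‖ₑ} := by
        simpa using measure_le_enorm_add_le (f i - g i) (g i) ε
    _ ≤ η / 2 + η / 2 := add_le_add (h_markov i) (by simpa using hi)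
    _ = η := ENNReal.add_halves η

theorem tendstoInMeasure_condExp_of_forall_eLpNorm_sub_le [NormedSpace ℝ E] [CompleteSpace E]
    {mα : ι → MeasurableSpace α} {l : Filter ι} {Z : α → E} (hZ : Integrable Z μ)
    (h : ∀ δ : ℝ≥0∞, 0 < δ → ∃ g : α → E, Integrable g μ ∧
      TendstoInMeasure μ (fun i => μ[g | mα i]) l g ∧ eLpNorm (Z - g) 1 μ ≤ δ) :
    TendstoInMeasure μ (fun i => μ[Z | mα i]) l Z := by
  rw [tendstoInMeasure_iff_tendstoInMeasure_sub]
  refine tendstoInMeasure_zero_of_forall_eLpNorm_sub_le fun δ hδ => ?_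
  obtain ⟨g, hg, hg_tendsto, hZg⟩ := h (δ / 2) (ENNReal.half_pos hδ.ne')
  refine ⟨fun i => μ[g | mα i] - g, tendstoInMeasure_iff_tendstoInMeasure_sub.1 hg_tendsto,
    fun i => ⟨?_, ?_⟩⟩
  · exact ((integrable_condExp.sub hZ).sub (integrable_condExp.sub hg)).aestronglyMeasurable
  have h_ae : μ[Z | mα i] - Z - (μ[g | mα i] - g) =ᵐ[μ] μ[Z - g | mα i] - (Z - g) := by
    filter_upwards [condExp_sub hZ hg (mα i)] with x hx
    simp only [Pi.sub_apply, hx]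
    abel
  calc eLpNorm (μ[Z | mα i] - Z - (μ[g | mα i] - g)) 1 μ
      = eLpNorm (μ[Z - g | mα i] - (Z - g)) 1 μ := eLpNorm_congr_ae h_ae
    _ ≤ eLpNorm (μ[Z - g | mα i]) 1 μ + eLpNorm (Z - g) 1 μ :=
        eLpNorm_sub_le integrable_condExp.aestronglyMeasurable
          (hZ.sub hg).aestronglyMeasurable le_rfl
    _ ≤ eLpNorm (Z - g) 1 μ + eLpNorm (Z - g) 1 μ := by
        gcongr; exact eLpNorm_condExp_le_eLpNorm _ le_rfl
    _ ≤ δ := by grw [hZg, ENNReal.add_halves]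

theorem SimpleFunc.integrable_of_le [IsFiniteMeasure μ] {m' : MeasurableSpace α} (hm : m' ≤ m)
    (f : @SimpleFunc α m' E) : Integrable f μ :=
  integrable_of_integrable_trim hm (SimpleFunc.integrable_of_isFiniteMeasure f)

end MeasureTheory

namespace WeakConvSigma

variable {Ω : Type*} {H : MeasurableSpace Ω} {μ : Measure Ω} [IsFiniteMeasure μ]
  {A : ℕ → MeasurableSpace Ω} {Alim : MeasurableSpace Ω}

theorem tendstoInMeasure_condExp_simpleFunc (h : WeakConvSigma μ A Alim) (hAlim : Alim ≤ H)
    (g : @SimpleFunc Ω Alim ℝ) : TendstoInMeasure μ (fun n => μ[g | A n]) atTop g := by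
  induction g using SimpleFunc.induction with
  | @const c s hs =>
    have h_coe : ⇑(SimpleFunc.piecewise s hs (SimpleFunc.const Ω c) (SimpleFunc.const Ω 0)) =
        c • s.indicator fun _ => (1 : ℝ) := by
      ext x; by_cases hx : x ∈ s <;> simp [hx]
    rw [h_coe]
    exact ((h s hs).const_smul c).congr (fun n => (condExp_smul c _ (A n)).symm) .rfl
  | @add f g _ hf hg =>
    exact (hf.add hg).congr (fun n => (condExp_add (SimpleFunc.integrable_of_le hAlim f)
      (SimpleFunc.integrable_of_le hAlim g) (A n)).symm) .rfl

theorem tendstoInMeasure_condExp (h : WeakConvSigma μ A Alim) (hAlim : Alim ≤ H) {Z : Ω → ℝ}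
    (hZ : Integrable Z μ) (hZ_meas : StronglyMeasurable[Alim] Z) :
    TendstoInMeasure μ (fun n => μ[Z | A n]) atTop Z := by
  refine tendstoInMeasure_condExp_of_forall_eLpNorm_sub_le hZ fun δ hδ => ?_
  obtain ⟨g, hg, -⟩ := (memLp_one_iff_integrable.2 (hZ.trim hAlim hZ_meas))
    |>.exists_simpleFunc_eLpNorm_sub_lt ENNReal.one_ne_top hδ.ne'
  refine ⟨g, SimpleFunc.integrable_of_le hAlim g,
    h.tendstoInMeasure_condExp_simpleFunc hAlim g, ?_⟩
  rw [← eLpNorm_trim hAlim (hZ_meas.sub g.stronglyMeasurable)]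
  exact hg.le

end WeakConvSigma

theorem weakConvSigma_iff_condexp_tendsto_general
    {Ω : Type*} {H : MeasurableSpace Ω} (μ : Measure Ω) [IsProbabilityMeasure μ]
    (A : ℕ → MeasurableSpace Ω) (Alim : MeasurableSpace Ω)
    (hAlim : Alim ≤ H) :
    WeakConvSigma μ A Alim ↔
      ∀ Z : Ω → ℝ, @Integrable ℝ _ _ Ω H Z μ → StronglyMeasurable[Alim] Z →
        TendstoInMeasure μ (fun n => μ[Z | A n]) atTop Z :=
  ⟨fun h _ hZ hZ_meas => h.tendstoInMeasure_condExp hAlim hZ hZ_meas, fun h B hB =>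
    h _ ((integrable_const 1).indicator (hAlim B hB)) (stronglyMeasurable_const.indicator hB)⟩

/-- A sequence of σ-algebras `A n` converges weakly to `Alim` if and only if for every
integrable `Alim`-measurable random variable `Z`, `E(Z | A n) → Z` in probability. -/
theorem weakConvSigma_iff_condexp_tendsto
    {Ω : Type*} {H : MeasurableSpace Ω} (μ : Measure Ω) [IsProbabilityMeasure μ]
    (A : ℕ → MeasurableSpace Ω) (Alim : MeasurableSpace Ω)
    (hA : ∀ n, A n ≤ H) (hAlim : Alim ≤ H) :
    WeakConvSigma μ A Alim ↔
      ∀ Z : Ω → ℝ, @Integrable ℝ _ _ Ω H Z μ → StronglyMeasurable[Alim] Z →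
        TendstoInMeasure μ (fun n => μ[Z | A n]) atTop Z :=
  weakConvSigma_iff_condexp_tendsto_general μ A Alim hAlim
end

section
/- If (A^n) and (B^n) are two sequences of sub-σ-algebras converging weakly to A and B respectively, then the σ-algebras A^n ∨ B^n (generated by the union) converge weakly to A ∨ B. -/
/-!
For a fixed sequence `F n` of sub-σ-algebras, the integrable `g` with `E[g | F n] → g` in `L¹`
form a closed linear subspace of `L¹`, since `‖E[g | m] - g‖₁ ≤ 2 ‖h - g‖₁ + ‖E[h | m] - h‖₁`.
Conditional expectations of a fixed integrable function are uniformly integrable, so for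
indicators this `L¹` convergence is the same as convergence in probability, and the sets whose
indicators satisfy it form a Dynkin system. It therefore suffices to treat the π-system of
rectangles `s ∩ t` with `s ∈ A`, `t ∈ B`: there `E[1_s | A n] E[1_t | B n]` is
`A n ∨ B n`-measurable and `L¹`-close to `1_s 1_t`, while `E[· | A n ∨ B n]` is within a factor
`2` of the best `A n ∨ B n`-measurable approximation.
-/

open MeasureTheory Filter

open Set MeasurableSpace Topology Function
open scoped ENNReal

theorem Set.abs_indicator_one_le_one {Ω : Type*} (s : Set Ω) (x : Ω) :
    |s.indicator (1 : Ω → ℝ) x| ≤ 1 := by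
  by_cases hx : x ∈ s <;> simp [hx]

theorem IsPiSystem.image2_inter {Ω : Type*} {C D : Set (Set Ω)} (hC : IsPiSystem C)
    (hD : IsPiSystem D) : IsPiSystem (image2 (· ∩ ·) C D) := by
  rintro _ ⟨s₁, hs₁, t₁, ht₁, rfl⟩ _ ⟨s₂, hs₂, t₂, ht₂, rfl⟩ hst
  refine ⟨s₁ ∩ s₂, hC _ hs₁ _ hs₂ ?_, t₁ ∩ t₂, hD _ ht₁ _ ht₂ ?_, inter_inter_inter_comm _ _ _ _⟩
  · exact hst.mono fun x hx => ⟨hx.1.1, hx.2.1⟩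
  · exact hst.mono fun x hx => ⟨hx.1.2, hx.2.2⟩

theorem MeasurableSpace.sup_eq_generateFrom_image2_inter {Ω : Type*}
    (m₁ m₂ : MeasurableSpace Ω) :
    m₁ ⊔ m₂ =
      generateFrom (image2 (· ∩ ·) {s | MeasurableSet[m₁] s} {t | MeasurableSet[m₂] t}) := by
  refine le_antisymm (sup_le ?_ ?_) (generateFrom_le ?_)
  · exact fun s hs =>
      measurableSet_generateFrom ⟨s, hs, univ, @MeasurableSet.univ _ m₂, inter_univ s⟩
  · exact fun t ht =>
      measurableSet_generateFrom ⟨univ, @MeasurableSet.univ _ m₁, t, ht, univ_inter t⟩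
  · rintro _ ⟨s, hs, t, ht, rfl⟩
    exact (le_sup_left (b := m₂) _ hs).inter (le_sup_right (a := m₁) _ ht)

namespace MeasureTheory

variable {Ω : Type*} {m0 : MeasurableSpace Ω} {μ : Measure Ω}

section CondExp

variable {E : Type*} [NormedAddCommGroup E] [NormedSpace ℝ E] [CompleteSpace E]
  {m : MeasurableSpace Ω} {g h : Ω → E} {p : ℝ≥0∞}

theorem eLpNorm_condExp_sub_le (hp : 1 ≤ p) (hg : Integrable g μ) (hh : Integrable h μ) :
    eLpNorm (μ[g|m] - g) p μ ≤ 2 * eLpNorm (h - g) p μ + eLpNorm (μ[h|m] - h) p μ := by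
  have hsplit : μ[g|m] - g =ᵐ[μ] μ[g - h|m] + (h - g) + (μ[h|m] - h) := by
    filter_upwards [condExp_sub hg hh m] with x hx
    simp only [Pi.add_apply, Pi.sub_apply] at hx ⊢
    rw [hx]; abel
  calc eLpNorm (μ[g|m] - g) p μ
      ≤ eLpNorm (μ[g - h|m]) p μ + eLpNorm (h - g) p μ + eLpNorm (μ[h|m] - h) p μ := by
        rw [eLpNorm_congr_ae hsplit]
        refine (eLpNorm_add_le ?_ ?_ hp).trans (add_le_add_left (eLpNorm_add_le ?_ ?_ hp) _)
        all_goals fun_prop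
    _ ≤ 2 * eLpNorm (h - g) p μ + eLpNorm (μ[h|m] - h) p μ := by
        rw [two_mul, ← eLpNorm_sub_comm g h]
        gcongr
        exact eLpNorm_condExp_le_eLpNorm _ hp

theorem eLpNorm_condExp_sub_le_of_stronglyMeasurable (hm : m ≤ m0) [SigmaFinite (μ.trim hm)]
    (hp : 1 ≤ p) (hg : Integrable g μ) (hh : Integrable h μ) (hhm : StronglyMeasurable[m] h) :
    eLpNorm (μ[g|m] - g) p μ ≤ 2 * eLpNorm (h - g) p μ := by
  simpa [condExp_of_stronglyMeasurable hm hhm hh] using eLpNorm_condExp_sub_le hp hg hh (m := m)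

end CondExp

theorem tendsto_eLpNorm_indicator_sub_iUnion [IsFiniteMeasure μ] {s : ℕ → Set Ω}
    (hs : ∀ n, MeasurableSet (s n)) (hmono : Monotone s) :
    Tendsto (fun n => eLpNorm ((s n).indicator 1 - (⋃ n, s n).indicator (1 : Ω → ℝ)) 1 μ)
      atTop (𝓝 0) := by
  have hdiff : ∀ n, (s n).indicator 1 - (⋃ n, s n).indicator (1 : Ω → ℝ)
      = -((⋃ n, s n) \ s n).indicator 1 := fun n => by
    rw [indicator_sdiff (subset_iUnion s n)]; abel
  have hmeas : ∀ n, μ ((⋃ n, s n) \ s n) = μ (⋃ n, s n) - μ (s n) := fun n =>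
    measure_sdiff (subset_iUnion s n) (hs n).nullMeasurableSet (measure_ne_top μ _)
  simp_rw [hdiff, eLpNorm_neg, Pi.one_def,
    eLpNorm_indicator_const ((MeasurableSet.iUnion hs).diff (hs _)) one_ne_zero
      ENNReal.one_ne_top, hmeas]
  simpa using ENNReal.Tendsto.sub (tendsto_const_nhds (x := μ (⋃ n, s n)))
    (tendsto_measure_iUnion_atTop (μ := μ) hmono) (.inl (measure_ne_top μ _))

theorem eLpNorm_mul_sub_mul_le {X Y x y : Ω → ℝ} (hX : AEStronglyMeasurable X μ)
    (hY : AEStronglyMeasurable Y μ) (hx : AEStronglyMeasurable x μ)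
    (hy : AEStronglyMeasurable y μ) (hXb : ∀ᵐ w ∂μ, |X w| ≤ 1) (hyb : ∀ᵐ w ∂μ, |y w| ≤ 1) :
    eLpNorm (X * Y - x * y) 1 μ ≤ eLpNorm (X - x) 1 μ + eLpNorm (Y - y) 1 μ := by
  rw [show X * Y - x * y = (X - x) * y + X * (Y - y) by ring]
  refine (eLpNorm_add_le (by fun_prop) (by fun_prop) le_rfl).trans (add_le_add ?_ ?_)
  · refine eLpNorm_mono_ae ?_
    filter_upwards [hyb] with w hw
    simpa [abs_mul] using mul_le_of_le_one_right (abs_nonneg _) hw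
  · refine eLpNorm_mono_ae ?_
    filter_upwards [hXb] with w hw
    simpa [abs_mul] using mul_le_of_le_one_left (abs_nonneg _) hw

def CondExpTendstoL1 (μ : Measure Ω) (F : ℕ → MeasurableSpace Ω) (g : Ω → ℝ) : Prop :=
  Tendsto (fun n => eLpNorm (μ[g|F n] - g) 1 μ) atTop (𝓝 0)

namespace CondExpTendstoL1

variable {F : ℕ → MeasurableSpace Ω} {f g : Ω → ℝ}

theorem iff_tendstoInMeasure [IsFiniteMeasure μ] (hF : ∀ n, F n ≤ m0) (hg : Integrable g μ) :
    CondExpTendstoL1 μ F g ↔ TendstoInMeasure μ (fun n => μ[g|F n]) atTop g :=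
  ⟨tendstoInMeasure_of_tendsto_eLpNorm one_ne_zero (fun _ => integrable_condExp.1) hg.1,
    tendsto_Lp_finite_of_tendstoInMeasure le_rfl ENNReal.one_ne_top
      (fun _ => integrable_condExp.1) (memLp_one_iff_integrable.2 hg)
      (hg.uniformIntegrable_condExp hF).unifIntegrable⟩

theorem const [IsFiniteMeasure μ] (hF : ∀ n, F n ≤ m0) (c : ℝ) :
    CondExpTendstoL1 μ F fun _ => c := by
  simp [CondExpTendstoL1, condExp_const (hF _)]

theorem add (hf : Integrable f μ) (hg : Integrable g μ) (hfF : CondExpTendstoL1 μ F f)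
    (hgF : CondExpTendstoL1 μ F g) : CondExpTendstoL1 μ F (f + g) := by
  have hle : ∀ n, eLpNorm (μ[f + g|F n] - (f + g)) 1 μ
      ≤ eLpNorm (μ[f|F n] - f) 1 μ + eLpNorm (μ[g|F n] - g) 1 μ := fun n => by
    have hsplit : μ[f + g|F n] - (f + g) =ᵐ[μ] (μ[f|F n] - f) + (μ[g|F n] - g) := by
      filter_upwards [condExp_add hf hg (F n)] with x hx
      simp only [Pi.add_apply, Pi.sub_apply] at hx ⊢
      rw [hx]; abel
    rw [eLpNorm_congr_ae hsplit]
    exact eLpNorm_add_le (by fun_prop) (by fun_prop) le_rfl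
  exact tendsto_of_tendsto_of_tendsto_of_le_of_le tendsto_const_nhds
    (by simpa using Tendsto.add hfF hgF) (fun _ => zero_le) hle

theorem neg (hf : CondExpTendstoL1 μ F f) : CondExpTendstoL1 μ F (-f) := by
  refine hf.congr fun n => ?_
  refine (eLpNorm_neg _ _ _).symm.trans (eLpNorm_congr_ae ?_)
  filter_upwards [condExp_neg f (F n)] with x hx
  simp only [Pi.neg_apply, Pi.sub_apply] at hx ⊢
  rw [hx]; ring

theorem sub (hf : Integrable f μ) (hg : Integrable g μ) (hfF : CondExpTendstoL1 μ F f)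
    (hgF : CondExpTendstoL1 μ F g) : CondExpTendstoL1 μ F (f - g) := by
  simpa only [sub_eq_add_neg] using hfF.add hf hg.neg hgF.neg

theorem of_tendsto_eLpNorm {G : ℕ → Ω → ℝ} (hg : Integrable g μ) (hG : ∀ k, Integrable (G k) μ)
    (hGg : Tendsto (fun k => eLpNorm (G k - g) 1 μ) atTop (𝓝 0))
    (hGF : ∀ k, CondExpTendstoL1 μ F (G k)) : CondExpTendstoL1 μ F g := by
  refine ENNReal.tendsto_nhds_zero.2 fun ε hε => ?_
  have hε3 : 0 < ε / 3 := ENNReal.div_pos hε.ne' ENNReal.ofNat_ne_top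
  obtain ⟨k, hk⟩ := (ENNReal.tendsto_nhds_zero.1 hGg _ hε3).exists
  filter_upwards [ENNReal.tendsto_nhds_zero.1 (hGF k) _ hε3] with n hn
  calc eLpNorm (μ[g|F n] - g) 1 μ
      ≤ 2 * eLpNorm (G k - g) 1 μ + eLpNorm (μ[G k|F n] - G k) 1 μ :=
        eLpNorm_condExp_sub_le le_rfl hg (hG k)
    _ ≤ 2 * (ε / 3) + ε / 3 := by gcongr
    _ = ε := by rw [two_mul, ENNReal.add_thirds]

theorem indicator_compl [IsFiniteMeasure μ] (hF : ∀ n, F n ≤ m0) {t : Set Ω}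
    (ht : MeasurableSet t) (h : CondExpTendstoL1 μ F (t.indicator 1)) :
    CondExpTendstoL1 μ F (tᶜ.indicator 1) := by
  rw [Set.indicator_compl]
  exact (const hF 1).sub (integrable_const 1) ((integrable_const 1).indicator ht) h

theorem indicator_iUnion [IsFiniteMeasure μ] {f : ℕ → Set Ω} (hd : Pairwise (Disjoint on f))
    (hf : ∀ i, MeasurableSet (f i)) (h : ∀ i, CondExpTendstoL1 μ F ((f i).indicator 1)) :
    CondExpTendstoL1 μ F ((⋃ i, f i).indicator 1) := by
  have hacc_meas : ∀ n, MeasurableSet (accumulate f n) := fun n => by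
    rw [accumulate_def]; exact .biUnion (to_countable _) fun i _ => hf i
  have hacc : ∀ n, CondExpTendstoL1 μ F ((accumulate f n).indicator 1) := by
    intro n
    induction n with
    | zero => simpa only [accumulate_zero_nat] using h 0
    | succ n ih =>
      rw [accumulate_succ, indicator_union_of_disjoint (disjoint_accumulate hd n.lt_succ_self)]
      exact ih.add ((integrable_const 1).indicator (hacc_meas n))
        ((integrable_const 1).indicator (hf _)) (h (n + 1))
  refine of_tendsto_eLpNorm ((integrable_const 1).indicator (.iUnion hf))
    (fun n => (integrable_const 1).indicator (hacc_meas n)) ?_ hacc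
  rw [← iUnion_accumulate]
  exact tendsto_eLpNorm_indicator_sub_iUnion hacc_meas monotone_accumulate

theorem mul [IsFiniteMeasure μ] {A B : ℕ → MeasurableSpace Ω} (hA : ∀ n, A n ≤ m0)
    (hB : ∀ n, B n ≤ m0) (hf : Integrable f μ) (hg : Integrable g μ)
    (hf1 : ∀ᵐ x ∂μ, |f x| ≤ 1) (hg1 : ∀ᵐ x ∂μ, |g x| ≤ 1)
    (hfA : CondExpTendstoL1 μ A f) (hgB : CondExpTendstoL1 μ B g) :
    CondExpTendstoL1 μ (fun n => A n ⊔ B n) (f * g) := by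
  have hle : ∀ n, eLpNorm (μ[f * g|A n ⊔ B n] - f * g) 1 μ
      ≤ 2 * (eLpNorm (μ[f|A n] - f) 1 μ + eLpNorm (μ[g|B n] - g) 1 μ) := fun n => by
    have hfA1 : ∀ᵐ x ∂μ, |μ[f|A n] x| ≤ 1 := ae_bdd_abs_condExp_of_ae_bdd_abs hf1
    calc eLpNorm (μ[f * g|A n ⊔ B n] - f * g) 1 μ
        ≤ 2 * eLpNorm (μ[f|A n] * μ[g|B n] - f * g) 1 μ :=
          eLpNorm_condExp_sub_le_of_stronglyMeasurable (sup_le (hA n) (hB n)) le_rfl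
            (hg.bdd_mul hf.1 (by simpa using hf1))
            (integrable_condExp.bdd_mul integrable_condExp.1 (by simpa using hfA1))
            ((stronglyMeasurable_condExp.mono le_sup_left).mul
              (stronglyMeasurable_condExp.mono le_sup_right))
      _ ≤ 2 * (eLpNorm (μ[f|A n] - f) 1 μ + eLpNorm (μ[g|B n] - g) 1 μ) := by
          gcongr
          exact eLpNorm_mul_sub_mul_le integrable_condExp.1 integrable_condExp.1 hf.1 hg.1
            hfA1 hg1
  refine tendsto_of_tendsto_of_tendsto_of_le_of_le tendsto_const_nhds ?_ (fun _ => zero_le) hle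
  simpa using
    ENNReal.Tendsto.const_mul (a := 2) (Tendsto.add hfA hgB) (.inr ENNReal.ofNat_ne_top)

end CondExpTendstoL1

theorem weakConvSigma_iff_forall_condExpTendstoL1 [IsFiniteMeasure μ]
    {F : ℕ → MeasurableSpace Ω} {G : MeasurableSpace Ω} (hF : ∀ n, F n ≤ m0) (hG : G ≤ m0) :
    WeakConvSigma μ F G ↔ ∀ s, MeasurableSet[G] s → CondExpTendstoL1 μ F (s.indicator 1) :=
  forall₂_congr fun _ hs => (CondExpTendstoL1.iff_tendstoInMeasure hF
    ((integrable_const 1).indicator (hG _ hs))).symm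

end MeasureTheory

/-- If  weakly and  weakly, then  weakly. -/
theorem weakConvSigma_sup
    {Ω : Type*} {H : MeasurableSpace Ω} (μ : Measure Ω) [IsProbabilityMeasure μ]
    (A B : ℕ → MeasurableSpace Ω) (Alim Blim : MeasurableSpace Ω)
    (hA : ∀ n, A n ≤ H) (hB : ∀ n, B n ≤ H) (hAlim : Alim ≤ H) (hBlim : Blim ≤ H)
    (hconvA : WeakConvSigma μ A Alim) (hconvB : WeakConvSigma μ B Blim) :
    WeakConvSigma μ (fun n => A n ⊔ B n) (Alim ⊔ Blim) := by
  have hAB : ∀ n, A n ⊔ B n ≤ H := fun n => sup_le (hA n) (hB n)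
  have hsup : Alim ⊔ Blim ≤ H := sup_le hAlim hBlim
  rw [weakConvSigma_iff_forall_condExpTendstoL1 hA hAlim] at hconvA
  rw [weakConvSigma_iff_forall_condExpTendstoL1 hB hBlim] at hconvB
  rw [weakConvSigma_iff_forall_condExpTendstoL1 hAB hsup]
  refine induction_on_inter (sup_eq_generateFrom_image2_inter Alim Blim)
    ((@isPiSystem_measurableSet _ Alim).image2_inter (@isPiSystem_measurableSet _ Blim))
    ?_ ?_ ?_ ?_
  · simpa using CondExpTendstoL1.const hAB 0
  · rintro _ ⟨s, hs, t, ht, rfl⟩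
    rw [inter_indicator_one]
    exact (hconvA s hs).mul hA hB ((integrable_const 1).indicator (hAlim _ hs))
      ((integrable_const 1).indicator (hBlim _ ht)) (ae_of_all _ (abs_indicator_one_le_one s))
      (ae_of_all _ (abs_indicator_one_le_one t)) (hconvB t ht)
  · exact fun t ht h => h.indicator_compl hAB (hsup _ ht)
  · exact fun f hd hf h => CondExpTendstoL1.indicator_iUnion hd (fun i => hsup _ (hf i)) h
end

section
/- If (A^n) and (B^n) are sequences of sub-σ-algebras with A^n ⊆ B^n for all n, and A^n converges weakly to a σ-algebra A, then B^n also converges weakly to A. -/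
/-! Since `Aₙ ⊆ Bₙ`, the tower property gives `E(f | Bₙ) - f = E(g | Bₙ) - g` with
`g = f - E(f | Aₙ)`, and `E(· | Bₙ)` is an `L¹` contraction, so
`‖E(f | Bₙ) - f‖₁ ≤ 2 ‖E(f | Aₙ) - f‖₁`. Conditional expectations of a fixed integrable function
are uniformly integrable, so by Vitali's theorem convergence in probability of `E(f | Aₙ)` and of
`E(f | Bₙ)` to `f` are equivalent to the corresponding `L¹` convergences. -/

open MeasureTheory Filter
open scoped ENNReal Topology

namespace MeasureTheory

variable {α : Type*} {m₀ : MeasurableSpace α} {μ : Measure α}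

theorem eLpNorm_condExp_sub_le_two_mul {E : Type*} [NormedAddCommGroup E] [NormedSpace ℝ E]
    [CompleteSpace E] {m₁ m₂ : MeasurableSpace α} (hm₁₂ : m₁ ≤ m₂) (hm₂ : m₂ ≤ m₀)
    [SigmaFinite (μ.trim hm₂)] {f : α → E} (hf : Integrable f μ) {p : ℝ≥0∞} (hp : 1 ≤ p) :
    eLpNorm (μ[f | m₂] - f) p μ ≤ 2 * eLpNorm (μ[f | m₁] - f) p μ := by
  set g := f - μ[f | m₁]
  have hg : Integrable g μ := hf.sub integrable_condExp
  have hcond : μ[g | m₂] =ᵐ[μ] μ[f | m₂] - μ[f | m₁] := by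
    filter_upwards [condExp_sub hf (integrable_condExp (m := m₁)) m₂] with x hx
    rw [hx, condExp_of_stronglyMeasurable hm₂ (stronglyMeasurable_condExp.mono hm₁₂)
      integrable_condExp]
  have hsub : μ[f | m₂] - f =ᵐ[μ] μ[g | m₂] - g := by
    filter_upwards [hcond] with x hx
    simp only [Pi.sub_apply, hx, g]
    abel
  calc eLpNorm (μ[f | m₂] - f) p μ = eLpNorm (μ[g | m₂] - g) p μ := eLpNorm_congr_ae hsub
    _ ≤ eLpNorm (μ[g | m₂]) p μ + eLpNorm g p μ :=
      eLpNorm_sub_le integrable_condExp.aestronglyMeasurable hg.aestronglyMeasurable hp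
    _ ≤ eLpNorm g p μ + eLpNorm g p μ := by gcongr; exact eLpNorm_condExp_le_eLpNorm g hp
    _ = 2 * eLpNorm (μ[f | m₁] - f) p μ := by rw [← two_mul, eLpNorm_sub_comm]

variable [IsFiniteMeasure μ] {f : α → ℝ}

theorem tendstoInMeasure_condExp_iff (hf : Integrable f μ) {F : ℕ → MeasurableSpace α}
    (hF : ∀ n, F n ≤ m₀) :
    TendstoInMeasure μ (fun n => μ[f | F n]) atTop f ↔
      Tendsto (fun n => eLpNorm (μ[f | F n] - f) 1 μ) atTop (𝓝 0) := by
  rw [← tendstoInMeasure_iff_tendsto_Lp_finite le_rfl ENNReal.one_ne_top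
    (fun _ => memLp_one_iff_integrable.2 integrable_condExp) (memLp_one_iff_integrable.2 hf)]
  exact (and_iff_left (hf.uniformIntegrable_condExp hF).unifIntegrable).symm

theorem TendstoInMeasure.condExp_of_le (hf : Integrable f μ) {A B : ℕ → MeasurableSpace α}
    (hAB : ∀ n, A n ≤ B n) (hB : ∀ n, B n ≤ m₀)
    (hA : TendstoInMeasure μ (fun n => μ[f | A n]) atTop f) :
    TendstoInMeasure μ (fun n => μ[f | B n]) atTop f := by
  rw [tendstoInMeasure_condExp_iff hf fun n => (hAB n).trans (hB n)] at hA
  rw [tendstoInMeasure_condExp_iff hf hB]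
  have hA2 : Tendsto (fun n => 2 * eLpNorm (μ[f | A n] - f) 1 μ) atTop (𝓝 0) := by
    simpa using ENNReal.Tendsto.const_mul hA (Or.inr ENNReal.ofNat_ne_top)
  exact tendsto_of_tendsto_of_tendsto_of_le_of_le tendsto_const_nhds hA2 (fun _ => zero_le)
    fun n => eLpNorm_condExp_sub_le_two_mul (hAB n) (hB n) hf le_rfl

end MeasureTheory

/-- If  for all  and  weakly, then  weakly. -/
theorem weakConvSigma_of_le
    {Ω : Type*} {H : MeasurableSpace Ω} (μ : Measure Ω) [IsProbabilityMeasure μ]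
    (A B : ℕ → MeasurableSpace Ω) (Alim : MeasurableSpace Ω)
    (hAB : ∀ n, A n ≤ B n) (hB : ∀ n, B n ≤ H) (hAlim : Alim ≤ H)
    (hconvA : WeakConvSigma μ A Alim) :
    WeakConvSigma μ B Alim := fun S hS =>
  (hconvA S hS).condExp_of_le ((integrable_const 1).indicator (hAlim S hS)) hAB hB
end

section
/- Let (G^n) be a sequence of right-continuous filtrations and G a right-continuous filtration on [0,T] such that G^n_t converges weakly to G_t for all t. Let τ be a G-stopping time taking finitely many values t_1 < ... < t_M. Then the random times τ_m := min{ t_i : E(1_{τ = t_i} | G^m_{t_i}) > 1/2 } are G^m-stopping times and τ_m converges in probability to τ. -/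
/-!
On the event where every conditional probability `E(1_{τ = tᵢ} | Gᵐ_{tᵢ})` is within `1/2` of
the indicator it approximates, exactly one of them exceeds `1/2`, namely the one with `tᵢ = τ`,
so `τₘ = τ` there. Weak convergence makes the complement of that event have vanishing
probability, since there are only finitely many `tᵢ`. The stopping time property holds because
`{τₘ ≤ s}` is a finite union of the `Gᵐ_{tᵢ}`-events `{E(1_{τ = tᵢ} | Gᵐ_{tᵢ}) > 1/2}` with
`tᵢ ≤ s`, or everything when `s ≥ T`.
-/

open MeasureTheory Filter

section

variable {Ω ι : Type*}

section FirstEventTime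

open scoped Classical in
noncomputable def firstEventTime (t : ι → ℝ) (A : ι → Set Ω) (T : ℝ) (ω : Ω) : ℝ :=
  if ∃ i, ω ∈ A i then sInf {s | ∃ i, s = t i ∧ ω ∈ A i} else T

variable {t : ι → ℝ} {A : ι → Set Ω} {T : ℝ}

theorem firstEventTime_le_iff [Finite ι] (ht : ∀ i, t i ≤ T) (ω : Ω) (s : ℝ) :
    firstEventTime t A T ω ≤ s ↔ T ≤ s ∨ ∃ i, ω ∈ A i ∧ t i ≤ s := by
  have hfin : {s | ∃ i, s = t i ∧ ω ∈ A i}.Finite :=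
    (Set.finite_range t).subset fun _ ⟨i, hi, _⟩ => ⟨i, hi.symm⟩
  unfold firstEventTime
  split_ifs with hex
  · obtain ⟨i, hi⟩ := hex
    have hle : ∀ j, ω ∈ A j → sInf {s | ∃ i, s = t i ∧ ω ∈ A i} ≤ t j :=
      fun j hj => csInf_le hfin.bddBelow ⟨j, rfl, hj⟩
    refine ⟨fun hs => Or.inr ?_, ?_⟩
    · have hne : {s | ∃ i, s = t i ∧ ω ∈ A i}.Nonempty := ⟨t i, i, rfl, hi⟩
      obtain ⟨j, hj, hjA⟩ := hne.csInf_mem hfin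
      exact ⟨j, hjA, hj ▸ hs⟩
    · rintro (hT | ⟨j, hj, hjs⟩)
      · exact (hle i hi).trans ((ht i).trans hT)
      · exact (hle j hj).trans hjs
  · simp only [not_exists] at hex
    simp [hex]

theorem firstEventTime_eq_of_mem_iff {ω : Ω} {i : ι} (hA : ∀ j, ω ∈ A j ↔ j = i) :
    firstEventTime t A T ω = t i := by
  have hset : {s | ∃ j, s = t j ∧ ω ∈ A j} = {t i} := by
    ext s
    simp [hA]
  rw [firstEventTime, if_pos ⟨i, (hA i).2 rfl⟩, hset, csInf_singleton]

theorem measurableSet_firstEventTime_le [Finite ι] {F : ℝ → MeasurableSpace Ω}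
    (hF : Monotone F) (hA : ∀ i, MeasurableSet[F (t i)] (A i)) (ht : ∀ i, t i ≤ T) (s : ℝ) :
    MeasurableSet[F s] {ω | firstEventTime t A T ω ≤ s} := by
  simp only [firstEventTime_le_iff ht, Set.ofPred_or, Set.ofPred_exists]
  refine (MeasurableSet.const _).union (MeasurableSet.iUnion fun i => ?_)
  by_cases hi : t i ≤ s
  · simpa [hi] using hF hi _ (hA i)
  · simp [hi]

end FirstEventTime

theorem measurableSet_eq_of_forall_exists_eq [Countable ι] {G : ℝ → MeasurableSpace Ω}
    (hG : Monotone G) {τ : Ω → ℝ} {t : ι → ℝ} (hτval : ∀ ω, ∃ i, τ ω = t i)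
    (hτ : ∀ s, MeasurableSet[G s] {ω | τ ω ≤ s}) (i : ι) :
    MeasurableSet[G (t i)] {ω | τ ω = t i} := by
  have hset : {ω | τ ω = t i} =
      {ω | τ ω ≤ t i} \ ⋃ j, ⋃ (_ : t j < t i), {ω | τ ω ≤ t j} := by
    ext ω
    obtain ⟨k, hk⟩ := hτval ω
    simp only [Set.mem_ofPred_eq, Set.mem_sdiff, Set.mem_iUnion, hk, not_exists, not_le]
    refine ⟨fun h => ⟨h.le, fun j hj => h ▸ hj⟩, fun ⟨hle, hlt⟩ => ?_⟩
    exact hle.eq_of_not_lt fun h => (hlt k h).false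
  rw [hset]
  exact (hτ _).diff (.iUnion fun j => .iUnion fun hj => hG hj.le _ (hτ _))

theorem half_lt_iff_mem_of_dist_indicator_lt {B : Set Ω} {ω : Ω} {x : ℝ}
    (h : dist x (B.indicator (fun _ => (1 : ℝ)) ω) < 1 / 2) : 1 / 2 < x ↔ ω ∈ B := by
  rw [Real.dist_eq] at h
  by_cases hω : ω ∈ B
  · rw [Set.indicator_of_mem hω] at h
    simp only [hω, iff_true]
    linarith [(abs_lt.1 h).1]
  · rw [Set.indicator_of_notMem hω, sub_zero] at h
    simp only [hω, iff_false, not_lt]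
    linarith [(abs_lt.1 h).2]

theorem tendstoInMeasure_of_ne_imp_exists_le_dist [MeasurableSpace Ω] [Fintype ι]
    {E F κ : Type*} [PseudoMetricSpace E] [PseudoMetricSpace F] {μ : Measure Ω} {l : Filter κ}
    {f : κ → ι → Ω → E} {h : ι → Ω → E} {g : κ → Ω → F} {g₀ : Ω → F} {δ : ℝ} (hδ : 0 < δ)
    (hf : ∀ i, TendstoInMeasure μ (fun m => f m i) l (h i))
    (hg : ∀ m ω, g m ω ≠ g₀ ω → ∃ i, δ ≤ dist (f m i ω) (h i ω)) :
    TendstoInMeasure μ g l g₀ := by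
  simp only [tendstoInMeasure_iff_dist] at hf ⊢
  intro ε hε
  have hsub : ∀ m, {ω | ε ≤ dist (g m ω) (g₀ ω)} ⊆ ⋃ i, {ω | δ ≤ dist (f m i ω) (h i ω)} :=
    fun m ω hω => Set.mem_iUnion.2 <| hg m ω fun heq => by
      simp only [Set.mem_ofPred_eq, heq, dist_self] at hω
      linarith
  refine tendsto_of_tendsto_of_tendsto_of_le_of_le tendsto_const_nhds ?_ (fun m => zero_le)
    fun m => (measure_mono (hsub m)).trans (measure_iUnion_fintype_le _ _)
  simpa using tendsto_finsetSum Finset.univ fun i _ => hf i δ hδ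

end

theorem stoppingTime_approximation_finiteValues_general
    {Ω : Type*} {H : MeasurableSpace Ω} (μ : Measure Ω)
    (T : ℝ)
    (Gn : ℕ → ℝ → MeasurableSpace Ω) (G : ℝ → MeasurableSpace Ω)
    (hGnmono : ∀ m, Monotone (Gn m)) (hGmono : Monotone G)
    (hconv : ∀ t ∈ Set.Icc (0:ℝ) T, WeakConvSigma μ (fun m => Gn m t) (G t))
    (M : ℕ) (t : Fin M → ℝ) (htmono : StrictMono t)
    (htrange : ∀ i, t i ∈ Set.Icc (0:ℝ) T)
    (τ : Ω → ℝ)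
    (hτval : ∀ ω, ∃ i, τ ω = t i)
    (hτstop : ∀ s, MeasurableSet[G s] {ω | τ ω ≤ s})
    (τm : ℕ → Ω → ℝ)
    (hτm : ∀ m ω,
      τm m ω =
        if h : ∃ i, (1:ℝ)/2 <
            (μ[Set.indicator {ω' | τ ω' = t i} (fun _ => (1 : ℝ)) | Gn m (t i)]) ω
        then sInf { s | ∃ i, s = t i ∧ (1:ℝ)/2 <
            (μ[Set.indicator {ω' | τ ω' = t i} (fun _ => (1 : ℝ)) | Gn m (t i)]) ω }
        else T) :
    (∀ m s, MeasurableSet[Gn m s] {ω | τm m ω ≤ s}) ∧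
      TendstoInMeasure μ τm atTop τ := by
  set A : ℕ → Fin M → Set Ω := fun m i =>
    {ω | 1 / 2 < μ[Set.indicator {ω' | τ ω' = t i} (fun _ => (1 : ℝ)) | Gn m (t i)] ω}
  have hτm_eq : ∀ m, τm m = firstEventTime t (A m) T := fun m => by
    funext ω
    rw [hτm m ω, dite_eq_ite, firstEventTime]
    -- the two `if`s differ only in their `Decidable` instances
    congr
  refine ⟨fun m s => ?_, ?_⟩
  · rw [hτm_eq m]
    exact measurableSet_firstEventTime_le (hGnmono m)
      (fun i => measurableSet_lt measurable_const stronglyMeasurable_condExp.measurable)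
      (fun i => (htrange i).2) s
  · refine tendstoInMeasure_of_ne_imp_exists_le_dist one_half_pos
      (fun i => hconv (t i) (htrange i) _
        (measurableSet_eq_of_forall_exists_eq hGmono hτval hτstop i))
      fun m ω hne => ?_
    by_contra! hclose
    obtain ⟨i, hi⟩ := hτval ω
    refine hne ?_
    rw [hτm_eq, hi]
    refine firstEventTime_eq_of_mem_iff fun j => ?_
    exact (half_lt_iff_mem_of_dist_indicator_lt (hclose j)).trans
      (by simp [hi, htmono.injective.eq_iff, eq_comm])

/-- Let `Gn` be right-continuous filtrations and `G` a right-continuous filtration on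
`[0,T]` with `Gn m t → G t` weakly for all `t`.  Let `τ` be a `G`-stopping time taking
the finitely many values `t 1 < … < t M`.  Then the random times
`τₘ = min { t i : E(1_{τ = t i} | Gn m (t i)) > 1/2 }` (set to `T` when the set is
empty) are `Gn m`-stopping times and converge in probability to `τ`. -/
theorem stoppingTime_approximation_finiteValues
    {Ω : Type*} {H : MeasurableSpace Ω} (μ : Measure Ω) [IsProbabilityMeasure μ]
    (T : ℝ) (hT : 0 < T)
    (Gn : ℕ → ℝ → MeasurableSpace Ω) (G : ℝ → MeasurableSpace Ω)
    (hGnmono : ∀ m, Monotone (Gn m)) (hGmono : Monotone G)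
    (hGnle : ∀ m t, Gn m t ≤ H) (hGle : ∀ t, G t ≤ H)
    (hGnrc : ∀ m t, Gn m t = ⨅ u ∈ Set.Ioi t, Gn m u)
    (hGrc : ∀ t, G t = ⨅ u ∈ Set.Ioi t, G u)
    (hconv : ∀ t ∈ Set.Icc (0:ℝ) T, WeakConvSigma μ (fun m => Gn m t) (G t))
    (M : ℕ) (hM : 0 < M) (t : Fin M → ℝ) (htmono : StrictMono t)
    (htrange : ∀ i, t i ∈ Set.Icc (0:ℝ) T)
    (τ : Ω → ℝ)
    (hτval : ∀ ω, ∃ i, τ ω = t i)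
    (hτstop : ∀ s, MeasurableSet[G s] {ω | τ ω ≤ s})
    (τm : ℕ → Ω → ℝ)
    (hτm : ∀ m ω,
      τm m ω =
        if h : ∃ i, (1:ℝ)/2 <
            (μ[Set.indicator {ω' | τ ω' = t i} (fun _ => (1 : ℝ)) | Gn m (t i)]) ω
        then sInf { s | ∃ i, s = t i ∧ (1:ℝ)/2 <
            (μ[Set.indicator {ω' | τ ω' = t i} (fun _ => (1 : ℝ)) | Gn m (t i)]) ω }
        else T) :
    (∀ m s, MeasurableSet[Gn m s] {ω | τm m ω ≤ s}) ∧
      TendstoInMeasure μ τm atTop τ :=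
  stoppingTime_approximation_finiteValues_general (H := H) μ T Gn G hGnmono hGmono hconv M t htmono
    htrange τ hτval hτstop τm hτm
end

section
/- Let (G^n) be a sequence of right-continuous filtrations and G a right-continuous filtration on [0,T] such that G^n_t converges weakly to G_t for all t. For every bounded G-stopping time τ, there exists a strictly increasing φ : ℕ → ℕ and a bounded sequence of random times (τ_n) such that each τ_{φ(n)} is a G^{φ(n)}-stopping time and τ_{φ(n)} converges in probability to τ. -/
/-!
Discretize time with mesh `h = T / (k + 1)`. For each grid point `t = i h`, the event
`{τ ≤ t}` lies in `G t`, so by weak convergence `P(τ ≤ t | Gⁿ t)` is, for large `n` and outside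
a small set, within `1/2` of its indicator. On that good set, the first grid time at which the
conditional probability exceeds `1/2` is `τ` rounded up to the grid, hence `h`-close to `τ`;
and this first time is a `Gⁿ`-stopping time because `Gⁿ` is increasing. A diagonal choice
`n = φ k` with `k → ∞` then gives convergence in probability.
-/

open MeasureTheory Filter

open Topology

open scoped ENNReal

section Hitting

variable {Ω β : Type*} {u : ℕ → Ω → β} {s : Set β} {N : ℕ}

theorem measurableSet_grid_hittingBtwn_le {F : ℝ → MeasurableSpace Ω} (hF : Monotone F)
    {t : ℕ → ℝ} (ht : Monotone t) (hu : ∀ i < N, MeasurableSet[F (t i)] {ω | u i ω ∈ s})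
    (r : ℝ) : MeasurableSet[F r] {ω | t (hittingBtwn u s 0 N ω) ≤ r} := by
  have hset : {ω | t (hittingBtwn u s 0 N ω) ≤ r}
      = (⋃ i, ⋃ (_ : i < N ∧ t i ≤ r), {ω | u i ω ∈ s}) ∪ {_ω | t N ≤ r} := by
    ext ω
    simp only [Set.mem_ofPred_eq, Set.mem_union, Set.mem_iUnion, exists_prop]
    constructor
    · intro hr
      rcases (hittingBtwn_le (u := u) (s := s) (n := 0) ω).lt_or_eq with hlt | heq
      · exact Or.inl ⟨_, ⟨hlt, hr⟩, hittingBtwn_mem_set_of_hittingBtwn_lt hlt⟩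
      · exact Or.inr (heq ▸ hr)
    · rintro (⟨i, ⟨hiN, hir⟩, his⟩ | hNr)
      · exact (ht (hittingBtwn_le_of_mem i.zero_le hiN.le his)).trans hir
      · exact (ht (hittingBtwn_le ω)).trans hNr
  rw [hset]
  exact .union (.iUnion fun i => .iUnion fun hi => hF hi.2 _ (hu i hi.1)) (.const _)

theorem abs_hittingBtwn_mul_sub_le {h x : ℝ} {ω : Ω} (hh : 0 ≤ h) (hx : 0 ≤ x)
    (hxN : x ≤ N * h) (hus : ∀ i < N, u i ω ∈ s ↔ x ≤ i * h) :
    |hittingBtwn u s 0 N ω * h - x| ≤ h := by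
  set j := hittingBtwn u s 0 N ω
  have hxj : x ≤ j * h := by
    rcases (hittingBtwn_le (u := u) (s := s) (n := 0) ω).lt_or_eq with hlt | heq
    · exact (hus j hlt).1 (hittingBtwn_mem_set_of_hittingBtwn_lt hlt)
    · rw [show j = N from heq]
      exact hxN
  have hjx : j * h ≤ x + h := by
    rcases Nat.eq_zero_or_eq_succ_pred j with hj | hj
    · rw [hj, Nat.cast_zero, zero_mul]
      linarith
    · have hpred : j.pred < j := by omega
      have hnot := notMem_of_lt_hittingBtwn hpred j.pred.zero_le
      rw [hus _ (hpred.trans_le (hittingBtwn_le ω)), not_le] at hnot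
      rw [hj, Nat.cast_succ]
      linarith
  rw [abs_le]
  constructor <;> linarith

end Hitting

section Measure

variable {Ω : Type*} {m : MeasurableSpace Ω} {μ : Measure Ω}

theorem tendsto_measure_biUnion_finset_nhds_zero {ι κ : Type*} {l : Filter κ}
    {E : κ → ι → Set Ω} (S : Finset ι) (hE : ∀ i ∈ S, Tendsto (fun n => μ (E n i)) l (𝓝 0)) :
    Tendsto (fun n => μ (⋃ i ∈ S, E n i)) l (𝓝 0) := by
  have hsum : Tendsto (fun n => ∑ i ∈ S, μ (E n i)) l (𝓝 0) := by
    simpa using tendsto_finsetSum S hE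
  exact tendsto_of_tendsto_of_tendsto_of_le_of_le tendsto_const_nhds hsum
    (fun _ => zero_le) (fun n => measure_biUnion_finset_le S (E n))

theorem exists_strictMono_tendstoInMeasure_diagonal {E : Type*} [PseudoMetricSpace E]
    {Y : ℕ → ℕ → Ω → E} {g : Ω → E} {δ : ℕ → ℝ} (hδ : Tendsto δ atTop (𝓝 0))
    (hY : ∀ k, Tendsto (fun n => μ {ω | δ k < dist (Y k n ω) (g ω)}) atTop (𝓝 0)) :
    ∃ φ : ℕ → ℕ, StrictMono φ ∧ TendstoInMeasure μ (fun k => Y k (φ k)) atTop g := by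
  have hsmall : ∀ k, ∀ᶠ n in atTop, μ {ω | δ k < dist (Y k n ω) (g ω)} ≤ (k : ℝ≥0∞)⁻¹ :=
    fun k => (hY k).eventually
      (eventually_le_nhds (ENNReal.inv_pos.2 (ENNReal.natCast_ne_top k)))
  obtain ⟨φ, hφ, hφY⟩ := extraction_forall_of_eventually hsmall
  refine ⟨φ, hφ, tendstoInMeasure_iff_dist.2 fun ε hε => ?_⟩
  refine tendsto_of_tendsto_of_tendsto_of_le_of_le' tendsto_const_nhds
    ENNReal.tendsto_inv_nat_nhds_zero (.of_forall fun _ => zero_le) ?_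
  filter_upwards [(hδ.eventually (gt_mem_nhds hε))] with k hk
  exact (measure_mono fun ω (hω : ε ≤ _) => hk.trans_le hω).trans (hφY k)

end Measure

section GridApprox

variable {Ω : Type*} {m : MeasurableSpace Ω}

theorem lt_iff_mem_of_dist_indicator_lt {B : Set Ω} {x : ℝ} {ω : Ω}
    (hx : dist x (B.indicator (fun _ => (1 : ℝ)) ω) < 1 / 2) : 1 / 2 < x ↔ ω ∈ B := by
  rw [Real.dist_eq, abs_lt] at hx
  by_cases hω : ω ∈ B
  · simp only [Set.indicator_of_mem hω] at hx
    exact ⟨fun _ => hω, fun _ => by linarith⟩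
  · simp only [Set.indicator_of_notMem hω] at hx
    exact ⟨fun _ => by linarith, fun h => absurd h hω⟩

noncomputable def gridApprox (μ : Measure Ω) (F : ℝ → MeasurableSpace Ω) (τ : Ω → ℝ) (h : ℝ)
    (N : ℕ) (ω : Ω) : ℝ :=
  hittingBtwn (fun (i : ℕ) => μ[{ω | τ ω ≤ i * h}.indicator (fun _ => (1 : ℝ)) | F (i * h)])
    (Set.Ioi (1 / 2)) 0 N ω * h

variable {μ : Measure Ω} {F : ℝ → MeasurableSpace Ω} {τ : Ω → ℝ} {h : ℝ} {N : ℕ}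

theorem abs_gridApprox_le (hh : 0 ≤ h) (ω : Ω) : |gridApprox μ F τ h N ω| ≤ N * h := by
  rw [gridApprox, abs_of_nonneg (by positivity)]
  exact mul_le_mul_of_nonneg_right (Nat.cast_le.2 (hittingBtwn_le ω)) hh

theorem measurableSet_gridApprox_le (hF : Monotone F) (hh : 0 ≤ h) (r : ℝ) :
    MeasurableSet[F r] {ω | gridApprox μ F τ h N ω ≤ r} :=
  measurableSet_grid_hittingBtwn_le (t := fun i : ℕ => (i : ℝ) * h) hF
    (fun _ _ hij => mul_le_mul_of_nonneg_right (Nat.cast_le.2 hij) hh)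
    (fun _ _ => stronglyMeasurable_condExp.measurable measurableSet_Ioi) r

theorem tendsto_measure_lt_dist_gridApprox {Fn : ℕ → ℝ → MeasurableSpace Ω} (hh : 0 ≤ h)
    (hτ0 : ∀ ω, 0 ≤ τ ω) (hτN : ∀ ω, τ ω ≤ N * h)
    (hconv : ∀ i < N, TendstoInMeasure μ
      (fun n => μ[{ω | τ ω ≤ i * h}.indicator (fun _ => (1 : ℝ)) | Fn n (i * h)]) atTop
      ({ω | τ ω ≤ i * h}.indicator (fun _ => (1 : ℝ)))) :
    Tendsto (fun n => μ {ω | h < dist (gridApprox μ (Fn n) τ h N ω) (τ ω)}) atTop (𝓝 0) := by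
  set B : ℕ → Set Ω := fun i => {ω | τ ω ≤ i * h}
  have hbad : ∀ n, {ω | h < dist (gridApprox μ (Fn n) τ h N ω) (τ ω)} ⊆
      ⋃ i ∈ Finset.range N, {ω | 1 / 2 ≤
        dist (μ[(B i).indicator (fun _ => (1 : ℝ)) | Fn n (i * h)] ω)
          ((B i).indicator (fun _ => (1 : ℝ)) ω)} := by
    intro n ω hω
    by_contra hgood
    simp only [Set.mem_iUnion, Set.mem_ofPred_eq, Finset.mem_range, not_exists, not_le] at hgood
    refine (abs_hittingBtwn_mul_sub_le hh (hτ0 ω) (hτN ω) fun i hi =>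
      lt_iff_mem_of_dist_indicator_lt (hgood i hi)).not_gt ?_
    rwa [Set.mem_ofPred_eq, Real.dist_eq] at hω
  refine tendsto_of_tendsto_of_tendsto_of_le_of_le tendsto_const_nhds
    (tendsto_measure_biUnion_finset_nhds_zero _ fun i hi => ?_) (fun _ => zero_le)
    (fun n => measure_mono (hbad n))
  exact tendstoInMeasure_iff_dist.1 (hconv i (Finset.mem_range.1 hi)) _ one_half_pos

end GridApprox

theorem stoppingTime_approximation_general
    {Ω : Type*} {H : MeasurableSpace Ω} (μ : Measure Ω)
    (T : ℝ) (hT : 0 < T)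
    (Gn : ℕ → ℝ → MeasurableSpace Ω) (G : ℝ → MeasurableSpace Ω)
    (hGnmono : ∀ n, Monotone (Gn n))
    (hconv : ∀ t ∈ Set.Icc (0:ℝ) T, WeakConvSigma μ (fun n => Gn n t) (G t))
    (τ : Ω → ℝ)
    (hτbdd : ∀ ω, τ ω ∈ Set.Icc (0:ℝ) T)
    (hτstop : ∀ s, MeasurableSet[G s] {ω | τ ω ≤ s}) :
    ∃ (φ : ℕ → ℕ) (τn : ℕ → Ω → ℝ),
      StrictMono φ ∧
      (∃ C : ℝ, ∀ n ω, |τn n ω| ≤ C) ∧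
      (∀ n s, MeasurableSet[Gn (φ n) s] {ω | τn (φ n) ω ≤ s}) ∧
      TendstoInMeasure μ (fun n => τn (φ n)) atTop τ := by
  set mesh : ℕ → ℝ := fun k => T / (k + 1 : ℕ)
  have hmesh : ∀ k, 0 ≤ mesh k := fun k => by positivity
  have hgrid : ∀ k, ((k + 1 : ℕ) : ℝ) * mesh k = T := fun k => by
    simp only [mesh]; field_simp
  set Y : ℕ → ℕ → Ω → ℝ := fun k n => gridApprox μ (Gn n) τ (mesh k) (k + 1)
  obtain ⟨φ, hφ, hYφ⟩ := exists_strictMono_tendstoInMeasure_diagonal (Y := Y)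
    ((tendsto_const_div_atTop_nhds_zero_nat T).comp (tendsto_add_atTop_nat 1))
    fun k => tendsto_measure_lt_dist_gridApprox (hmesh k) (fun ω => (hτbdd ω).1)
      (fun ω => (hgrid k).symm ▸ (hτbdd ω).2) fun i hi =>
        hconv _ ⟨mul_nonneg i.cast_nonneg (hmesh k),
          (mul_le_mul_of_nonneg_right (Nat.cast_le.2 hi.le) (hmesh k)).trans_eq (hgrid k)⟩
          _ (hτstop _)
  have hinv : ∀ k, Function.invFun φ (φ k) = k := Function.leftInverse_invFun hφ.injective
  refine ⟨φ, fun n => Y (Function.invFun φ n) n, hφ, ⟨T, fun n ω => ?_⟩, fun k s => ?_, ?_⟩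
  · exact (abs_gridApprox_le (hmesh _) ω).trans (hgrid _).le
  · simpa only [hinv] using measurableSet_gridApprox_le (τ := τ) (N := k + 1) (hGnmono (φ k))
      (hmesh k) s
  · simpa only [hinv] using hYφ

/-- Let `Gn` be right-continuous filtrations and `G` a right-continuous filtration on
`[0,T]` with `Gn n t → G t` weakly for all `t`.  For every bounded `G`-stopping time
`τ` there exist a strictly increasing `φ : ℕ → ℕ` and a bounded sequence of random
times `τn` such that each `τn (φ n)` is a `Gn (φ n)`-stopping time and
`τn (φ n) → τ` in probability. -/
theorem stoppingTime_approximation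
    {Ω : Type*} {H : MeasurableSpace Ω} (μ : Measure Ω) [IsProbabilityMeasure μ]
    (T : ℝ) (hT : 0 < T)
    (Gn : ℕ → ℝ → MeasurableSpace Ω) (G : ℝ → MeasurableSpace Ω)
    (hGnmono : ∀ n, Monotone (Gn n)) (hGmono : Monotone G)
    (hGnle : ∀ n t, Gn n t ≤ H) (hGle : ∀ t, G t ≤ H)
    (hGnrc : ∀ n t, Gn n t = ⨅ u ∈ Set.Ioi t, Gn n u)
    (hGrc : ∀ t, G t = ⨅ u ∈ Set.Ioi t, G u)
    (hconv : ∀ t ∈ Set.Icc (0:ℝ) T, WeakConvSigma μ (fun n => Gn n t) (G t))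
    (τ : Ω → ℝ)
    (hτbdd : ∀ ω, τ ω ∈ Set.Icc (0:ℝ) T)
    (hτstop : ∀ s, MeasurableSet[G s] {ω | τ ω ≤ s}) :
    ∃ (φ : ℕ → ℕ) (τn : ℕ → Ω → ℝ),
      StrictMono φ ∧
      (∃ C : ℝ, ∀ n ω, |τn n ω| ≤ C) ∧
      (∀ n s, MeasurableSet[Gn (φ n) s] {ω | τn (φ n) ω ≤ s}) ∧
      TendstoInMeasure μ (fun n => τn (φ n)) atTop τ :=
  stoppingTime_approximation_general (H := H) μ T hT Gn G hGnmono hconv τ hτbdd hτstop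
end

section
/- Let (τ_i)_{i≥1} be random times and (X_i)_{i≥1} random variables such that for all i, X_i and τ_i are independent, E|X_i| = μ for all i, Σ_{i≥1} P(τ_i ≤ T) < ∞, and P(τ_i = t) = 0 for all t and i. Then N_t = Σ_{i=1}^∞ X_i 1_{τ_i ≤ t} is integrable for each t ∈ [0,T], the partial-sum processes N^n_t = Σ_{i=1}^n X_i 1_{τ_i ≤ t} converge to N uniformly on [0,T] in probability, and N has no fixed times of discontinuity (P(ΔN_t ≠ 0) = 0 for all t). -/
/-!
By independence, `E|X i 1_{τ i ≤ t}| = μ₀ P(τ i ≤ t)`, so `Σ P(τ i ≤ T) < ∞` makes the series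
defining `N_t` absolutely integrable. Outside the event `⋃_{i ≥ n} {τ i ≤ T}` the partial sum
`Nⁿ` already coincides with `N` on all of `[0,T]`, and the probability of that event is bounded
by a tail of a convergent series. Finally `N_t` and `N_{t-}` can only differ on `⋃ i {τ i = t}`,
a null set because the `τ i` have no atoms.
-/

open MeasureTheory Filter ProbabilityTheory Set
open scoped ENNReal Topology

lemma ENNReal.tsum_ne_top_of_summable_toReal {ι : Type*} {f : ι → ℝ≥0∞} (hf : ∀ i, f i ≠ ∞)
    (h : Summable fun i => (f i).toReal) : ∑' i, f i ≠ ∞ := by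
  rw [← tsum_congr fun i => ENNReal.ofReal_toReal (hf i),
    ← ENNReal.ofReal_tsum_of_nonneg (fun _ => ENNReal.toReal_nonneg) h]
  exact ENNReal.ofReal_ne_top

namespace MeasureTheory

variable {α : Type*} [MeasurableSpace α] {μ : Measure α}

lemma tendsto_measure_iUnion_add_atTop_zero {s : ℕ → Set α} (hs : ∑' i, μ (s i) ≠ ∞) :
    Tendsto (fun n => μ (⋃ k, s (k + n))) atTop (𝓝 0) :=
  tendsto_of_tendsto_of_tendsto_of_le_of_le tendsto_const_nhds
    (ENNReal.tendsto_sum_nat_add _ hs) (fun _ => zero_le) fun _ => measure_iUnion_le _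

lemma integrable_tsum {ι E : Type*} [Countable ι] [NormedAddCommGroup E] [CompleteSpace E]
    {f : ι → α → E} (hf : ∀ i, AEStronglyMeasurable (f i) μ)
    (hfin : ∑' i, ∫⁻ a, ‖f i a‖ₑ ∂μ ≠ ∞) : Integrable (fun a => ∑' i, f i a) μ := by
  have hlintegral : ∫⁻ a, ∑' i, ‖f i a‖ₑ ∂μ ≠ ∞ := by
    rwa [lintegral_tsum fun i => (hf i).enorm]
  have hsummable : ∀ᵐ a ∂μ, Summable fun i => f i a := by
    filter_upwards [ae_lt_top' (AEMeasurable.tsum fun i => (hf i).enorm) hlintegral]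
      with a ha using Summable.of_enorm ha.ne
  refine ⟨aestronglyMeasurable_of_tendsto_ae atTop
    (fun s : Finset ι => Finset.aestronglyMeasurable_sum s fun i _ => hf i) ?_, ?_⟩
  · filter_upwards [hsummable] with a ha
    simp only [Finset.sum_apply]
    exact ha.hasSum
  · exact (lintegral_mono fun a => enorm_tsum_le_tsum_enorm).trans_lt hlintegral.lt_top

end MeasureTheory

lemma ProbabilityTheory.IndepFun.lintegral_enorm_indicator_preimage {Ω E β : Type*}
    [MeasurableSpace Ω] {μ : Measure Ω} [NormedAddCommGroup E] [MeasurableSpace E]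
    [OpensMeasurableSpace E] [MeasurableSpace β] {X : Ω → E} {Y : Ω → β}
    (hXY : IndepFun X Y μ) (hX : AEStronglyMeasurable X μ) (hY : Measurable Y)
    {s : Set β} (hs : MeasurableSet s) :
    ∫⁻ ω, ‖(Y ⁻¹' s).indicator X ω‖ₑ ∂μ = (∫⁻ ω, ‖X ω‖ₑ ∂μ) * μ (Y ⁻¹' s) := by
  have hφ : Measurable (s.indicator fun _ => (1 : ℝ≥0∞)) := measurable_const.indicator hs
  calc ∫⁻ ω, ‖(Y ⁻¹' s).indicator X ω‖ₑ ∂μ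
      = ∫⁻ ω, ‖X ω‖ₑ * s.indicator (fun _ => 1) (Y ω) ∂μ := by
        congr with ω
        by_cases h : Y ω ∈ s <;> simp [h]
    _ = (∫⁻ ω, ‖X ω‖ₑ ∂μ) * ∫⁻ ω, s.indicator (fun _ => 1) (Y ω) ∂μ :=
        lintegral_mul_eq_lintegral_mul_lintegral_of_indepFun'' hX.enorm
          (hφ.comp hY).aemeasurable (hXY.comp measurable_enorm hφ)
    _ = (∫⁻ ω, ‖X ω‖ₑ ∂μ) * μ (Y ⁻¹' s) := by
        rw [← lintegral_indicator_one (hY hs)]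
        rfl

section MarkedPointProcess

variable {Ω E : Type*} {τ : ℕ → Ω → ℝ}

lemma tsum_indicator_le_eq_sum_range [AddCommMonoid E] [TopologicalSpace E] (X : ℕ → Ω → E)
    {n : ℕ} {t : ℝ} {ω : Ω} (h : ∀ i ≥ n, t < τ i ω) :
    ∑' i, {ω' | τ i ω' ≤ t}.indicator (X i) ω
      = ∑ i ∈ Finset.range n, {ω' | τ i ω' ≤ t}.indicator (X i) ω :=
  tsum_eq_sum fun i hi =>
    indicator_of_notMem (s := {ω' | τ i ω' ≤ t})
      (not_le.2 (h i (not_lt.1 (Finset.mem_range.not.1 hi)))) _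

variable [MeasurableSpace Ω] {μ : Measure Ω}

lemma integrable_tsum_indicator_le [NormedAddCommGroup E] [CompleteSpace E] [MeasurableSpace E]
    [OpensMeasurableSpace E] {X : ℕ → Ω → E} (hX : ∀ i, AEStronglyMeasurable (X i) μ)
    (hτ : ∀ i, Measurable (τ i)) (hindep : ∀ i, IndepFun (X i) (τ i) μ) {C : ℝ≥0∞}
    (hC : C ≠ ∞) (hXC : ∀ i, ∫⁻ ω, ‖X i ω‖ₑ ∂μ ≤ C) {t : ℝ}
    (hsum : ∑' i, μ {ω | τ i ω ≤ t} ≠ ∞) :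
    Integrable (fun ω => ∑' i, {ω' | τ i ω' ≤ t}.indicator (X i) ω) μ := by
  refine integrable_tsum (fun i => (hX i).indicator (hτ i measurableSet_Iic)) (ne_top_of_le_ne_top
    (ENNReal.mul_ne_top hC hsum) ?_)
  calc ∑' i, ∫⁻ ω, ‖{ω' | τ i ω' ≤ t}.indicator (X i) ω‖ₑ ∂μ
      = ∑' i, (∫⁻ ω, ‖X i ω‖ₑ ∂μ) * μ {ω | τ i ω ≤ t} :=
        tsum_congr fun i => (hindep i).lintegral_enorm_indicator_preimage (hX i) (hτ i)
          measurableSet_Iic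
    _ ≤ ∑' i, C * μ {ω | τ i ω ≤ t} := ENNReal.tsum_le_tsum fun i => by gcongr; exact hXC i
    _ = C * ∑' i, μ {ω | τ i ω ≤ t} := ENNReal.tsum_mul_left

lemma tendsto_measure_le_iSup_abs_sum_range_sub_tsum_indicator (X : ℕ → Ω → ℝ) {S : Set ℝ}
    {T : ℝ} (hS : S ⊆ Iic T) (hsum : ∑' i, μ {ω | τ i ω ≤ T} ≠ ∞) {ε : ℝ} (hε : 0 < ε) :
    Tendsto (fun n => μ {ω | ε ≤ ⨆ t ∈ S,
        |(∑ i ∈ Finset.range n, {ω' | τ i ω' ≤ t}.indicator (X i) ω)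
          - ∑' i, {ω' | τ i ω' ≤ t}.indicator (X i) ω|}) atTop (𝓝 0) := by
  refine tendsto_of_tendsto_of_tendsto_of_le_of_le tendsto_const_nhds
    (tendsto_measure_iUnion_add_atTop_zero hsum) (fun _ => zero_le) fun n => measure_mono ?_
  intro ω hω
  by_contra hω'
  simp only [mem_iUnion, mem_ofPred_eq, not_exists, not_le] at hω'
  have hlate : ∀ i ≥ n, T < τ i ω := fun i hi => by
    simpa only [Nat.sub_add_cancel hi] using hω' (i - n)
  have hsup : ⨆ t ∈ S, |(∑ i ∈ Finset.range n, {ω' | τ i ω' ≤ t}.indicator (X i) ω)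
      - ∑' i, {ω' | τ i ω' ≤ t}.indicator (X i) ω| ≤ 0 := by
    refine Real.iSup_le (fun t => Real.iSup_le (fun ht => ?_) le_rfl) le_rfl
    rw [tsum_indicator_le_eq_sum_range X fun i hi => (hS ht).trans_lt (hlate i hi), sub_self,
      abs_zero]
  exact (hε.trans_le hω).not_ge hsup

lemma measure_tsum_indicator_le_ne_tsum_indicator_lt [AddCommMonoid E] [TopologicalSpace E]
    (X : ℕ → Ω → E) {t : ℝ} (hτ : ∀ i, μ {ω | τ i ω = t} = 0) :
    μ {ω | ∑' i, {ω' | τ i ω' ≤ t}.indicator (X i) ω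
      ≠ ∑' i, {ω' | τ i ω' < t}.indicator (X i) ω} = 0 := by
  refine measure_mono_null (fun ω hω => ?_) (measure_iUnion_null hτ)
  by_contra hω'
  simp only [mem_iUnion, mem_ofPred_eq, not_exists] at hω'
  refine hω (tsum_congr fun i => ?_)
  simp only [indicator_apply, mem_ofPred_eq, le_iff_lt_or_eq, hω' i, or_false]

end MarkedPointProcess

theorem markedPointProcess_convergence_general
    {Ω : Type*} {H : MeasurableSpace Ω} (μ : Measure Ω) [IsProbabilityMeasure μ]
    (T : ℝ)
    (τ : ℕ → Ω → ℝ) (X : ℕ → Ω → ℝ)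
    (hτmeas : ∀ i, Measurable (τ i))
    (hXint : ∀ i, Integrable (X i) μ)
    (hindep : ∀ i, IndepFun (X i) (τ i) μ)
    (μ₀ : ℝ) (hmean : ∀ i, ∫ ω, |X i ω| ∂μ = μ₀)
    (hsum : Summable (fun i => (μ {ω | τ i ω ≤ T}).toReal))
    (hnoatom : ∀ i (t : ℝ), μ {ω | τ i ω = t} = 0)
    (N : ℝ → Ω → ℝ)
    (hN : ∀ t ω, N t ω = ∑' i, Set.indicator {ω' | τ i ω' ≤ t} (X i) ω) :
    (∀ t ∈ Set.Icc (0:ℝ) T, Integrable (N t) μ) ∧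
    (∀ ε > (0:ℝ),
      Tendsto (fun n => μ {ω | ε ≤
          ⨆ t ∈ Set.Icc (0:ℝ) T,
            |(∑ i ∈ Finset.range n, Set.indicator {ω' | τ i ω' ≤ t} (X i) ω) - N t ω|})
        atTop (nhds 0)) ∧
    (∀ t ∈ Set.Icc (0:ℝ) T,
      μ {ω | N t ω ≠ ∑' i, Set.indicator {ω' | τ i ω' < t} (X i) ω} = 0) := by
  obtain rfl : N = fun t ω => ∑' i, {ω' | τ i ω' ≤ t}.indicator (X i) ω :=
    funext fun t => funext (hN t)
  have hsumT : ∑' i, μ {ω | τ i ω ≤ T} ≠ ∞ :=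
    ENNReal.tsum_ne_top_of_summable_toReal (fun _ => measure_ne_top _ _) hsum
  have hXmean : ∀ i, ∫⁻ ω, ‖X i ω‖ₑ ∂μ = ENNReal.ofReal μ₀ := fun i => by
    rw [← ofReal_integral_norm_eq_lintegral_enorm (hXint i), ← hmean i]
    simp only [Real.norm_eq_abs]
  refine ⟨fun t ht => ?_, fun ε hε =>
    tendsto_measure_le_iSup_abs_sum_range_sub_tsum_indicator X Icc_subset_Iic_self hsumT hε,
    fun t _ => measure_tsum_indicator_le_ne_tsum_indicator_lt X fun i => hnoatom i t⟩
  refine integrable_tsum_indicator_le (fun i => (hXint i).1) hτmeas hindep ENNReal.ofReal_ne_top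
    (fun i => (hXmean i).le) (ne_top_of_le_ne_top hsumT (ENNReal.tsum_le_tsum fun i => ?_))
  exact measure_mono fun ω hω => le_trans hω ht.2

/-- Let `τ i` be nonnegative random times and `X i` integrable random variables with
`X i` independent of `τ i`, common mean absolute value `μ₀`, `Σ P(τ i ≤ T) < ∞` and
`P(τ i = t) = 0` for all `t`.  Then the marked point process
`N_t = Σ_{i} X i · 1_{τ i ≤ t}` is integrable for each `t ∈ [0,T]`, the partial sums
`Nⁿ` converge to `N` uniformly on `[0,T]` in probability, and `N` has no fixed times
of discontinuity. -/
theorem markedPointProcess_convergence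
    {Ω : Type*} {H : MeasurableSpace Ω} (μ : Measure Ω) [IsProbabilityMeasure μ]
    (T : ℝ) (hT : 0 < T)
    (τ : ℕ → Ω → ℝ) (X : ℕ → Ω → ℝ)
    (hτmeas : ∀ i, Measurable (τ i)) (hXmeas : ∀ i, Measurable (X i))
    (hτnonneg : ∀ i ω, 0 ≤ τ i ω)
    (hXint : ∀ i, Integrable (X i) μ)
    (hindep : ∀ i, IndepFun (X i) (τ i) μ)
    (μ₀ : ℝ) (hmean : ∀ i, ∫ ω, |X i ω| ∂μ = μ₀)
    (hsum : Summable (fun i => (μ {ω | τ i ω ≤ T}).toReal))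
    (hnoatom : ∀ i (t : ℝ), μ {ω | τ i ω = t} = 0)
    (N : ℝ → Ω → ℝ)
    (hN : ∀ t ω, N t ω = ∑' i, Set.indicator {ω' | τ i ω' ≤ t} (X i) ω) :
    (∀ t ∈ Set.Icc (0:ℝ) T, Integrable (N t) μ) ∧
    (∀ ε > (0:ℝ),
      Tendsto (fun n => μ {ω | ε ≤
          ⨆ t ∈ Set.Icc (0:ℝ) T,
            |(∑ i ∈ Finset.range n, Set.indicator {ω' | τ i ω' ≤ t} (X i) ω) - N t ω|})
        atTop (nhds 0)) ∧
    (∀ t ∈ Set.Icc (0:ℝ) T,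
      μ {ω | N t ω ≠ ∑' i, Set.indicator {ω' | τ i ω' < t} (X i) ω} = 0) :=
  markedPointProcess_convergence_general (H := H) μ T τ X hτmeas hXint hindep μ₀ hmean hsum hnoatom
    N hN
end
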